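/- Let A be a subspace arrangement in ℂ^l and x₀ ∈ A a separator. Then the map induced in cohomology by the inclusion j : D(A') ↪ D(A) is injective in every degree: j* : H^q(D(A')) → H^q(D(A)) is injective for all q. -/

import Mathlib

/-!
Formalization of the Yuzvinsky–Feichtner rational model `D(B)` of the
complement of an arrangement of linear subspaces of `ℂ^l`, together with the
deletion/restriction constructions of the paper.
-/

open scoped Classical

noncomputable section

/-- The type of linear subspaces of `ℂ^l`. -/
abbrev Subsp (l : ℕ) := Submodule ℂ (Fin l → ℂ)

/-- Intersection of a finite set of subspaces (`⊤`, i.e. `ℂ^l`, for the empty set). -/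
def inter {l : ℕ} (σ : Finset (Subsp l)) : Subsp l := σ.inf id

/-- Underlying vector space of the Yuzvinsky–Feichtner model: formal ℚ-linear
combinations of finite sets of subspaces (basis elements are the `σ ⊆ B`). -/
abbrev DFull (l : ℕ) := Finset (Subsp l) →₀ ℚ

/-- 1-based position of `x` inside `σ`, with respect to the linear order `r`. -/
def pos {l : ℕ} (r : LinearOrder (Subsp l)) (σ : Finset (Subsp l)) (x : Subsp l) : ℕ :=
  (σ.filter fun y => r.lt y x).card + 1

/-- Value of the differential on the basis element `σ`:
`dσ = ∑_{j : ∩(σ∖{x_j}) = ∩σ} (−1)^j (σ∖{x_j})`. -/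
def dBasis {l : ℕ} (r : LinearOrder (Subsp l)) (σ : Finset (Subsp l)) : DFull l :=
  ∑ x ∈ σ.filter fun x => inter (σ.erase x) = inter σ,
    ((-1 : ℚ) ^ pos r σ x) • Finsupp.single (σ.erase x) (1 : ℚ)

/-- The differential of the Yuzvinsky–Feichtner complex. -/
def diff {l : ℕ} (r : LinearOrder (Subsp l)) : DFull l →ₗ[ℚ] DFull l :=
  Finsupp.lsum ℚ fun σ => LinearMap.toSpanSingleton ℚ (DFull l) (dBasis r σ)

/-- Codimension of `W` inside the ambient subspace `X` (as an integer). -/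
def codimIn {l : ℕ} (X W : Subsp l) : ℤ :=
  (Module.finrank ℂ X : ℤ) - (Module.finrank ℂ (W ⊓ X : Subsp l) : ℤ)

/-- Codimension of `W` in `ℂ^l`. -/
def codim {l : ℕ} (W : Subsp l) : ℤ := codimIn ⊤ W

/-- Degree of the basis element `σ`: `deg σ = 2 codim (∩σ) − |σ|`, the
codimension being computed inside the ambient space `X`. -/
def degIn {l : ℕ} (X : Subsp l) (σ : Finset (Subsp l)) : ℤ :=
  2 * codimIn X (inter σ) - (σ.card : ℤ)

/-- `D(B)`: the span of the basis elements `σ ⊆ B`. -/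
def Dsub {l : ℕ} (B : Finset (Subsp l)) : Submodule ℚ (DFull l) :=
  Submodule.span ℚ {f | ∃ σ : Finset (Subsp l), σ ⊆ B ∧ f = Finsupp.single σ (1 : ℚ)}

/-- The degree-`q` component of `D(B)` (ambient space `X`). -/
def Dcomp {l : ℕ} (X : Subsp l) (B : Finset (Subsp l)) (q : ℤ) : Submodule ℚ (DFull l) :=
  Submodule.span ℚ
    {f | ∃ σ : Finset (Subsp l), σ ⊆ B ∧ degIn X σ = q ∧ f = Finsupp.single σ (1 : ℚ)}

/-- Degree-`q` cocycles of `D(B)`. -/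
def cocycles {l : ℕ} (r : LinearOrder (Subsp l)) (X : Subsp l) (B : Finset (Subsp l)) (q : ℤ) :
    Submodule ℚ (DFull l) :=
  Dcomp X B q ⊓ LinearMap.ker (diff r)

/-- Degree-`q` coboundaries of `D(B)`. -/
def cobounds {l : ℕ} (r : LinearOrder (Subsp l)) (X : Subsp l) (B : Finset (Subsp l)) (q : ℤ) :
    Submodule ℚ (DFull l) :=
  Dcomp X B q ⊓ Submodule.map (diff r) (Dcomp X B (q - 1))

/-- Degree-`q` cohomology `H^q(D(B))`. -/
abbrev cohomology {l : ℕ} (r : LinearOrder (Subsp l)) (X : Subsp l) (B : Finset (Subsp l)) (q : ℤ) :=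
  cocycles r X B q ⧸ Submodule.comap (cocycles r X B q).subtype (cobounds r X B q)

lemma Dcomp_mono {l : ℕ} (X : Subsp l) {B B' : Finset (Subsp l)} (h : B' ⊆ B) (q : ℤ) :
    Dcomp X B' q ≤ Dcomp X B q :=
  Submodule.span_mono (by rintro f ⟨σ, h1, h2, rfl⟩; exact ⟨σ, h1.trans h, h2, rfl⟩)

lemma cocycles_mono {l : ℕ} (r : LinearOrder (Subsp l)) (X : Subsp l) {B B' : Finset (Subsp l)}
    (h : B' ⊆ B) (q : ℤ) : cocycles r X B' q ≤ cocycles r X B q :=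
  inf_le_inf_right _ (Dcomp_mono X h q)

lemma cobounds_mono {l : ℕ} (r : LinearOrder (Subsp l)) (X : Subsp l) {B B' : Finset (Subsp l)}
    (h : B' ⊆ B) (q : ℤ) : cobounds r X B' q ≤ cobounds r X B q :=
  inf_le_inf (Dcomp_mono X h q) (Submodule.map_mono (Dcomp_mono X h (q - 1)))

/-- The map induced in degree-`q` cohomology by an inclusion of arrangements `B' ⊆ B`
(induced by the inclusion of cochain complexes `D(B') ↪ D(B)`). -/
def inducedMap {l : ℕ} (r : LinearOrder (Subsp l)) (X : Subsp l) {B B' : Finset (Subsp l)}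
    (h : B' ⊆ B) (q : ℤ) : cohomology r X B' q →ₗ[ℚ] cohomology r X B q :=
  Submodule.mapQ (Submodule.comap (cocycles r X B' q).subtype (cobounds r X B' q))
    (Submodule.comap (cocycles r X B q).subtype (cobounds r X B q))
    (Submodule.inclusion (cocycles_mono r X h q)) (by
      intro v hv
      simp only [Submodule.mem_comap, Submodule.subtype_apply, Submodule.coe_inclusion] at hv ⊢
      exact cobounds_mono r X h q hv)

lemma eraseSubset {l : ℕ} (A : Finset (Subsp l)) (x₀ : Subsp l) : A.erase x₀ ⊆ A := by
  intro y hy; exact Finset.mem_of_mem_erase hy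

/-- A subspace arrangement: no member is contained in another. -/
def IsArrangement {l : ℕ} (A : Finset (Subsp l)) : Prop :=
  ∀ x ∈ A, ∀ y ∈ A, x ≤ y → x = y

/-- `Ã'' = {x₀ ∩ y | y ∈ A'}`. -/
def tildeRestriction {l : ℕ} (x₀ : Subsp l) (A' : Finset (Subsp l)) : Finset (Subsp l) :=
  A'.image fun y => x₀ ⊓ y

/-- The restricted arrangement `A''`: the elements of `Ã''` that are not strictly
contained in another element of `Ã''`. -/
def restriction {l : ℕ} (x₀ : Subsp l) (A' : Finset (Subsp l)) : Finset (Subsp l) :=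
  (tildeRestriction x₀ A').filter fun w => ∀ w' ∈ tildeRestriction x₀ A', ¬ w < w'

lemma restriction_subset {l : ℕ} (x₀ : Subsp l) (A' : Finset (Subsp l)) :
    restriction x₀ A' ⊆ tildeRestriction x₀ A' := Finset.filter_subset _ _

/-- `x₀` is a separator: `x₀ ∩ (∩ A') ⊊ ∩ A'`. -/
def IsSeparator {l : ℕ} (A : Finset (Subsp l)) (x₀ : Subsp l) : Prop :=
  x₀ ⊓ inter (A.erase x₀) < inter (A.erase x₀)

/-- The conditions imposed in the paper on the fixed linear order on the
subspaces: `x₀` comes first, the equivalence classes of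
`y ∼ z ⟺ x₀ ∩ y = x₀ ∩ z` on `A' = A ∖ {x₀}` are consecutive intervals,
and the order on `Ã''` is compatible with the one on `A'`. -/
def GoodOrder {l : ℕ} (r : LinearOrder (Subsp l)) (A : Finset (Subsp l)) (x₀ : Subsp l) : Prop :=
  (∀ y ∈ A.erase x₀, r.lt x₀ y) ∧
  (∀ y ∈ A.erase x₀, ∀ z ∈ A.erase x₀, ∀ w ∈ A.erase x₀,
      r.le y z → r.le z w → x₀ ⊓ y = x₀ ⊓ w → x₀ ⊓ y = x₀ ⊓ z) ∧
  (∀ y ∈ A.erase x₀, ∀ z ∈ A.erase x₀, r.lt y z → x₀ ⊓ y ≠ x₀ ⊓ z →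
      r.lt (x₀ ⊓ y) (x₀ ⊓ z))

/-- Value of the map `φ` on a basis element `σ`. -/
def phiBasis {l : ℕ} (x₀ : Subsp l) (σ : Finset (Subsp l)) : DFull l :=
  if x₀ ∈ σ ∧ Set.InjOn (fun y => x₀ ⊓ y) ↑(σ.erase x₀) then
    ((-1 : ℚ) ^ (σ.card - 1)) • Finsupp.single ((σ.erase x₀).image fun y => x₀ ⊓ y) (1 : ℚ)
  else 0

/-- The map `φ : D(A) → D(Ã'')` (defined on the whole ambient space). -/
def phi {l : ℕ} (x₀ : Subsp l) : DFull l →ₗ[ℚ] DFull l :=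
  Finsupp.lsum ℚ fun σ => LinearMap.toSpanSingleton ℚ (DFull l) (phiBasis x₀ σ)

lemma phi_apply_single {l : ℕ} (x₀ : Subsp l) (σ : Finset (Subsp l)) :
    phi x₀ (Finsupp.single σ (1 : ℚ)) = phiBasis x₀ σ := by
  simp [phi]

lemma diff_apply_single {l : ℕ} (r : LinearOrder (Subsp l)) (σ : Finset (Subsp l)) :
    diff r (Finsupp.single σ (1 : ℚ)) = dBasis r σ := by
  simp [diff]

lemma phi_vanish {l : ℕ} (x₀ : Subsp l) {B : Finset (Subsp l)} (hx : x₀ ∉ B) :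
    ∀ f ∈ Dsub B, phi x₀ f = 0 := by
  intro f hf
  induction hf using Submodule.span_induction with
  | mem f hfmem =>
      obtain ⟨σ, hσ, rfl⟩ := hfmem
      rw [phi_apply_single]
      have hx₀σ : ¬ x₀ ∈ σ := fun h => hx (hσ h)
      simp [phiBasis, hx₀σ]
  | zero => simp
  | add f g _ _ hf hg => simp [map_add, hf, hg]
  | smul c f _ hf => simp [map_smul, hf]

lemma diff_mem {l : ℕ} (r : LinearOrder (Subsp l)) {B : Finset (Subsp l)} :
    ∀ f ∈ Dsub B, diff r f ∈ Dsub B := by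
  intro f hf
  induction hf using Submodule.span_induction with
  | mem f hfmem =>
      obtain ⟨σ, hσ, rfl⟩ := hfmem
      rw [diff_apply_single, dBasis]
      refine Submodule.sum_mem _ fun x hx => Submodule.smul_mem _ _ ?_
      exact Submodule.subset_span ⟨σ.erase x, (Finset.erase_subset _ _).trans hσ, rfl⟩
  | zero => simp
  | add f g _ _ hf hg => rw [map_add]; exact (Dsub B).add_mem hf hg
  | smul c f _ hf => rw [map_smul]; exact (Dsub B).smul_mem c hf

/-- The quotient cochain complex `D(A)/D(A')`. -/
abbrev DQuot {l : ℕ} (A : Finset (Subsp l)) (x₀ : Subsp l) :=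
  Dsub A ⧸ Submodule.comap (Dsub A).subtype (Dsub (A.erase x₀))

/-- Projection `D(A) → D(A)/D(A')`. -/
def quotProj {l : ℕ} (A : Finset (Subsp l)) (x₀ : Subsp l) : Dsub A →ₗ[ℚ] DQuot A x₀ :=
  (Submodule.comap (Dsub A).subtype (Dsub (A.erase x₀))).mkQ

/-- The differential, restricted to `D(A)`. -/
def diffRes {l : ℕ} (r : LinearOrder (Subsp l)) (A : Finset (Subsp l)) : Dsub A →ₗ[ℚ] Dsub A :=
  (diff r).restrict fun f hf => diff_mem r f hf

/-- The differential of the quotient complex `D(A)/D(A')`. -/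
def diffQuot {l : ℕ} (r : LinearOrder (Subsp l)) (A : Finset (Subsp l)) (x₀ : Subsp l) :
    DQuot A x₀ →ₗ[ℚ] DQuot A x₀ :=
  Submodule.mapQ _ _ (diffRes r A) (by
      intro v hv
      simp only [Submodule.mem_comap, Submodule.subtype_apply] at hv ⊢
      exact diff_mem r _ hv)

/-- The map `φ̄ : D(A)/D(A') → D(Ã'')` induced by `φ`. -/
def phiBar {l : ℕ} (x₀ : Subsp l) (A : Finset (Subsp l)) : DQuot A x₀ →ₗ[ℚ] DFull l :=
  Submodule.liftQ _ ((phi x₀).comp (Dsub A).subtype) (by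
    intro v hv
    simp only [Submodule.mem_comap, Submodule.subtype_apply] at hv
    simp only [LinearMap.mem_ker, LinearMap.comp_apply, Submodule.subtype_apply]
    exact phi_vanish x₀ (Finset.notMem_erase x₀ A) _ hv)

/-- The subspace `I_{u,v}` of `D(A)/D(A')`, as a subspace of `D(A)` before
projecting: spanned by the `{x₀,u,τ} − {x₀,v,τ}` and the `{x₀,u,v,τ}`. -/
def IuvFull {l : ℕ} (A : Finset (Subsp l)) (x₀ u v : Subsp l) : Submodule ℚ (DFull l) :=
  Submodule.span ℚ
    ({f | ∃ τ : Finset (Subsp l), (↑τ : Set (Subsp l)) ⊆ ↑A \ {x₀, u, v} ∧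
        f = Finsupp.single (insert x₀ (insert u τ)) (1 : ℚ)
          - Finsupp.single (insert x₀ (insert v τ)) (1 : ℚ)} ∪
     {f | ∃ τ : Finset (Subsp l), (↑τ : Set (Subsp l)) ⊆ ↑A \ {x₀, u, v} ∧
        f = Finsupp.single (insert x₀ (insert u (insert v τ))) (1 : ℚ)})

/-- The subspace `I_{u,v} ⊆ D(A)/D(A')`. -/
def Iuv {l : ℕ} (A : Finset (Subsp l)) (x₀ u v : Subsp l) : Submodule ℚ (DQuot A x₀) :=
  Submodule.map (quotProj A x₀) (Submodule.comap (Dsub A).subtype (IuvFull A x₀ u v))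

/-- The set `E` of pairs `(y,z)` of distinct elements of `A'` with `x₀ ∩ y = x₀ ∩ z`. -/
def Epairs {l : ℕ} (A : Finset (Subsp l)) (x₀ : Subsp l) : Set (Subsp l × Subsp l) :=
  {p | p.1 ∈ A.erase x₀ ∧ p.2 ∈ A.erase x₀ ∧ x₀ ⊓ p.1 = x₀ ⊓ p.2 ∧ p.1 ≠ p.2}

/-- The subspace `V = Σ_{(u,v) ∈ E} I_{u,v}` of `D(A)/D(A')`. -/
def Vsub {l : ℕ} (A : Finset (Subsp l)) (x₀ : Subsp l) : Submodule ℚ (DQuot A x₀) :=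
  ⨆ p ∈ Epairs A x₀, Iuv A x₀ p.1 p.2

/-- Degree-`q` part of the quotient complex `D(A)/D(A')`. -/
def DcompQuot {l : ℕ} (X : Subsp l) (A : Finset (Subsp l)) (x₀ : Subsp l) (q : ℤ) :
    Submodule ℚ (DQuot A x₀) :=
  Submodule.map (quotProj A x₀) (Submodule.comap (Dsub A).subtype (Dcomp X A q))

def cocyclesQuot {l : ℕ} (r : LinearOrder (Subsp l)) (X : Subsp l) (A : Finset (Subsp l))
    (x₀ : Subsp l) (q : ℤ) : Submodule ℚ (DQuot A x₀) :=
  DcompQuot X A x₀ q ⊓ LinearMap.ker (diffQuot r A x₀)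

def coboundsQuot {l : ℕ} (r : LinearOrder (Subsp l)) (X : Subsp l) (A : Finset (Subsp l))
    (x₀ : Subsp l) (q : ℤ) : Submodule ℚ (DQuot A x₀) :=
  DcompQuot X A x₀ q ⊓ Submodule.map (diffQuot r A x₀) (DcompQuot X A x₀ (q - 1))

/-- Degree-`q` cohomology of the quotient complex `D(A)/D(A')`. -/
abbrev cohomologyQuot {l : ℕ} (r : LinearOrder (Subsp l)) (X : Subsp l) (A : Finset (Subsp l))
    (x₀ : Subsp l) (q : ℤ) :=
  cocyclesQuot r X A x₀ q ⧸
    Submodule.comap (cocyclesQuot r X A x₀ q).subtype (coboundsQuot r X A x₀ q)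

/-- Ungraded cocycles of `D(B)`. -/
def cocyclesAll {l : ℕ} (r : LinearOrder (Subsp l)) (B : Finset (Subsp l)) :
    Submodule ℚ (DFull l) :=
  Dsub B ⊓ LinearMap.ker (diff r)

/-- Ungraded coboundaries of `D(B)`. -/
def coboundsAll {l : ℕ} (r : LinearOrder (Subsp l)) (B : Finset (Subsp l)) :
    Submodule ℚ (DFull l) :=
  Dsub B ⊓ Submodule.map (diff r) (Dsub B)

/-- Ungraded cohomology `H^*(D(B))`. -/
abbrev cohomologyAll {l : ℕ} (r : LinearOrder (Subsp l)) (B : Finset (Subsp l)) :=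
  cocyclesAll r B ⧸ Submodule.comap (cocyclesAll r B).subtype (coboundsAll r B)

/-- The map `θ : D(A') → D(Ã'')`, `{x_{i₁},…,x_{i_r}} ↦ {x₀ ∩ x_{i₁},…,x₀ ∩ x_{i_r}}`. -/
def theta {l : ℕ} (x₀ : Subsp l) : DFull l →ₗ[ℚ] DFull l :=
  Finsupp.lsum ℚ fun σ =>
    LinearMap.toSpanSingleton ℚ (DFull l) (Finsupp.single (σ.image fun y => x₀ ⊓ y) (1 : ℚ))

/-- The map `k : D(A) → D(A')`, the identity on basis elements not containing
`x₀`, and zero on those containing `x₀`. -/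
def kmap {l : ℕ} (x₀ : Subsp l) : DFull l →ₗ[ℚ] DFull l :=
  Finsupp.lsum ℚ fun σ =>
    if x₀ ∈ σ then 0 else LinearMap.toSpanSingleton ℚ (DFull l) (Finsupp.single σ (1 : ℚ))

/-- The Euler characteristic of `D(A)`:
`χ = Σ_q (−1)^q dim_ℚ H^q(D(A))` (all degrees lie in `[−|A|, 2l]`). -/
def eulerChar {l : ℕ} (r : LinearOrder (Subsp l)) (A : Finset (Subsp l)) : ℚ :=
  ∑ q ∈ Finset.Icc (-(A.card : ℤ)) (2 * l : ℤ),
    (-1 : ℚ) ^ q * (Module.finrank ℚ (cohomology r ⊤ A q) : ℚ)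

/-- The intersection lattice `L(A)`: all intersections of members of `A`
(with `ℂ^l = ∩∅` as bottom element), ordered by reverse inclusion. -/
def latticeSet {l : ℕ} (A : Finset (Subsp l)) : Set (Subsp l) :=
  {W | ∃ S : Finset (Subsp l), S ⊆ A ∧ W = inter S}

/-- `covL A a b`: in the intersection lattice `L(A)` (ordered by reverse
inclusion), `b` covers `a`. -/
def covL {l : ℕ} (A : Finset (Subsp l)) (a b : Subsp l) : Prop :=
  b < a ∧ ∀ c ∈ latticeSet A, ¬(b < c ∧ c < a)

/-- The meet `a ∧ b` in the intersection lattice `L(A)`: the intersection of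
the members of `A` containing both `a` and `b`. -/
def meetL {l : ℕ} (A : Finset (Subsp l)) (a b : Subsp l) : Subsp l :=
  inter (A.filter fun x => a ≤ x ∧ b ≤ x)

/-- `L(A)` is a geometric lattice: it is a finite atomistic semimodular lattice.
(Atoms are the elements covering the bottom element `ℂ^l`; every element is the
join — i.e. intersection — of the atoms it lies above; and the lattice is
(upper) semimodular.  The join of `a` and `b` in `L(A)` is `a ⊓ b`.) -/
def IsGeometricL {l : ℕ} (A : Finset (Subsp l)) : Prop :=
  (∀ a ∈ latticeSet A, a = sInf {t : Subsp l | t ∈ latticeSet A ∧ covL A ⊤ t ∧ a ≤ t}) ∧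
  (∀ a ∈ latticeSet A, ∀ b ∈ latticeSet A, covL A (meetL A a b) a → covL A b (a ⊓ b))

end

/-!
Since `x₀` is a separator, no face of a basis element `σ ∋ x₀` obtained by dropping `x₀`
appears in `dσ`: otherwise `∩A' ⊆ ∩(σ ∖ {x₀}) = ∩σ ⊆ x₀`. Hence the projection `k` killing
the basis elements that contain `x₀` is a degree-preserving cochain map `D(A) → D(A')`
restricting to the identity on `D(A')`, so `k` is a retraction of `j` and `j*` is injective.
-/

lemma inducedMap_injective_of_retraction {l : ℕ} (r : LinearOrder (Subsp l)) (X : Subsp l)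
    {B B' : Finset (Subsp l)} (h : B' ⊆ B) (q : ℤ) (k : DFull l →ₗ[ℚ] DFull l)
    (hk_deg : Dcomp X B (q - 1) ≤ (Dcomp X B' (q - 1)).comap k)
    (hk_diff : ∀ f ∈ Dcomp X B (q - 1), k (diff r f) = diff r (k f))
    (hk_id : ∀ f ∈ Dcomp X B' q, k f = f) :
    Function.Injective (inducedMap r X h q) := by
  rw [← LinearMap.ker_eq_bot, Submodule.eq_bot_iff]
  intro x hx
  obtain ⟨v, rfl⟩ := Submodule.Quotient.mk_surjective _ x
  rw [LinearMap.mem_ker, inducedMap, Submodule.mapQ_apply, Submodule.Quotient.mk_eq_zero] at hx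
  rw [Submodule.Quotient.mk_eq_zero]
  simp only [Submodule.mem_comap, Submodule.subtype_apply, Submodule.coe_inclusion] at hx ⊢
  obtain ⟨-, w, hw, hdw⟩ := hx
  have hv : (v : DFull l) ∈ Dcomp X B' q := (Submodule.mem_inf.mp v.2).1
  refine Submodule.mem_inf.mpr ⟨hv, k w, hk_deg hw, ?_⟩
  rw [← hk_diff w hw, hdw, hk_id _ hv]

lemma Dcomp_le_Dsub {l : ℕ} (X : Subsp l) (B : Finset (Subsp l)) (q : ℤ) :
    Dcomp X B q ≤ Dsub B :=
  Submodule.span_le.mpr fun _ ⟨σ, hσ, _, hf⟩ => Submodule.subset_span ⟨σ, hσ, hf⟩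

lemma kmap_single {l : ℕ} (x₀ : Subsp l) (σ : Finset (Subsp l)) (c : ℚ) :
    kmap x₀ (Finsupp.single σ c) = if x₀ ∈ σ then 0 else Finsupp.single σ c := by
  by_cases h : x₀ ∈ σ <;> simp [kmap, h, Finsupp.smul_single]

lemma kmap_eq_self_of_mem_Dsub {l : ℕ} {x₀ : Subsp l} {B : Finset (Subsp l)} (hx₀ : x₀ ∉ B)
    {f : DFull l} (hf : f ∈ Dsub B) : kmap x₀ f = f := by
  refine LinearMap.eqOn_span' (g := LinearMap.id) ?_ hf
  rintro _ ⟨σ, hσ, rfl⟩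
  have h : x₀ ∉ σ := fun h => hx₀ (hσ h)
  simp [kmap_single, h]

lemma Dcomp_le_comap_kmap {l : ℕ} (X x₀ : Subsp l) (B : Finset (Subsp l)) (q : ℤ) :
    Dcomp X B q ≤ (Dcomp X (B.erase x₀) q).comap (kmap x₀) := by
  refine Submodule.span_le.mpr ?_
  rintro _ ⟨σ, hσ, hdeg, rfl⟩
  by_cases h : x₀ ∈ σ
  · simp [kmap_single, h]
  · rw [SetLike.mem_coe, Submodule.mem_comap, kmap_single, if_neg h]
    exact Submodule.subset_span ⟨σ, fun y hy => Finset.mem_erase.mpr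
      ⟨fun hyx => h (hyx ▸ hy), hσ hy⟩, hdeg, rfl⟩

lemma IsSeparator.inter_erase_ne {l : ℕ} {B : Finset (Subsp l)} {x₀ : Subsp l}
    (hsep : IsSeparator B x₀) {σ : Finset (Subsp l)} (hσ : σ ⊆ B) (hx₀ : x₀ ∈ σ) :
    inter (σ.erase x₀) ≠ inter σ := by
  intro heq
  have hinter : inter σ = x₀ ⊓ inter (σ.erase x₀) := by
    conv_lhs => rw [← Finset.insert_erase hx₀]
    simp [inter]
  have hle : inter (σ.erase x₀) ≤ x₀ := (heq.trans hinter).le.trans inf_le_left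
  have hB : inter (B.erase x₀) ≤ inter (σ.erase x₀) :=
    Finset.inf_mono (Finset.erase_subset_erase x₀ hσ)
  exact hsep.ne (inf_eq_right.mpr (hB.trans hle))

lemma kmap_dBasis {l : ℕ} (r : LinearOrder (Subsp l)) {B : Finset (Subsp l)} {x₀ : Subsp l}
    (hsep : IsSeparator B x₀) {σ : Finset (Subsp l)} (hσ : σ ⊆ B) :
    kmap x₀ (dBasis r σ) = if x₀ ∈ σ then 0 else dBasis r σ := by
  rw [dBasis, map_sum]
  split_ifs with h
  · refine Finset.sum_eq_zero fun x hx => ?_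
    rw [Finset.mem_filter] at hx
    have hx₀x : x₀ ≠ x := by
      rintro rfl
      exact hsep.inter_erase_ne hσ h hx.2
    simp [kmap_single, h, hx₀x]
  · exact Finset.sum_congr rfl fun x _ => by simp [kmap_single, h]

lemma kmap_diff {l : ℕ} (r : LinearOrder (Subsp l)) {B : Finset (Subsp l)} {x₀ : Subsp l}
    (hsep : IsSeparator B x₀) {f : DFull l} (hf : f ∈ Dsub B) :
    kmap x₀ (diff r f) = diff r (kmap x₀ f) := by
  refine LinearMap.eqOn_span' (f := kmap x₀ ∘ₗ diff r) (g := diff r ∘ₗ kmap x₀) ?_ hf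
  rintro _ ⟨σ, hσ, rfl⟩
  by_cases h : x₀ ∈ σ <;>
    simp [diff_apply_single, kmap_dBasis r hsep hσ, kmap_single, h]

theorem statement11_general {l : ℕ} (r : LinearOrder (Subsp l)) (A : Finset (Subsp l))
    (x₀ : Subsp l) (hsep : IsSeparator A x₀) :
    ∀ q : ℤ, Function.Injective (inducedMap r ⊤ (eraseSubset A x₀) q) := fun q =>
  inducedMap_injective_of_retraction r ⊤ (eraseSubset A x₀) q (kmap x₀)
    (Dcomp_le_comap_kmap ⊤ x₀ A (q - 1))
    (fun _ hf => kmap_diff r hsep (Dcomp_le_Dsub ⊤ A (q - 1) hf))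
    (fun _ hf => kmap_eq_self_of_mem_Dsub (Finset.notMem_erase x₀ A) (Dcomp_le_Dsub ⊤ _ q hf))

/-- from the proof of Proposition 4.4. If `x₀ ∈ A` is a
separator, then the map induced in cohomology by the inclusion
`j : D(A') ↪ D(A)` is injective in every degree. -/
theorem statement11 {l : ℕ} (r : LinearOrder (Subsp l)) (A : Finset (Subsp l))
    (harr : IsArrangement A) (x₀ : Subsp l) (hx₀ : x₀ ∈ A) (hsep : IsSeparator A x₀) :
    ∀ q : ℤ, Function.Injective (inducedMap r ⊤ (eraseSubset A x₀) q) :=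
  statement11_general r A x₀ hsep
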